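/- In the coarse-grain model, the Sameh-Kuck schedule assigning elimination elim(i, k, k) to time step i + k − 2 is a valid coarse-grain schedule, and its makespan (critical path length) equals p + q − 2 when p > q ≥ 1, and 2q − 3 when p = q > 1. -/

import Mathlib

namespace CoarseQR

/-- `(i, k)` is a position to be zeroed out in the coarse-grain model of the QR
factorization of a `p × q` matrix: `1 ≤ k ≤ min p q` and `k < i ≤ p`. -/
def IsPos (p q i k : ℕ) : Prop := 1 ≤ k ∧ k ≤ min p q ∧ k < i ∧ i ≤ p

/-- `piv` and `σ` describe a valid coarse-grain schedule of a `p × q` matrix: position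
`(i, k)` is zeroed out by `elim(i, piv i k, k)` (one time unit) at time step `σ i k ≥ 1`;
eliminations sharing a time step involve pairwise disjoint pairs of rows; `elim(i, piv, k)`
comes strictly after all eliminations `elim(i, *, k')` and `elim(piv, *, k')` with
`k' < k`, and strictly before the elimination `elim(piv, *, k)` of its pivot row. -/
def CoarseValidSchedule (p q : ℕ) (piv σ : ℕ → ℕ → ℕ) : Prop :=
  (∀ i k, IsPos p q i k → 1 ≤ σ i k ∧ 1 ≤ piv i k ∧ piv i k ≤ p ∧ piv i k ≠ i) ∧
  (∀ i k i' k', IsPos p q i k → IsPos p q i' k' → (i, k) ≠ (i', k') →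
      σ i k = σ i' k' →
      i ≠ i' ∧ i ≠ piv i' k' ∧ piv i k ≠ i' ∧ piv i k ≠ piv i' k') ∧
  (∀ i k k', IsPos p q i k → 1 ≤ k' → k' < k → σ i k' < σ i k) ∧
  (∀ i k k', IsPos p q i k → 1 ≤ k' → k' < k → k' < piv i k →
      σ (piv i k) k' < σ i k) ∧
  (∀ i k, IsPos p q i k → k < piv i k → σ i k < σ (piv i k) k)

/-- The makespan (critical path length) of a coarse-grain schedule: the largest time
step used. -/
noncomputable def makespan (p q : ℕ) (σ : ℕ → ℕ → ℕ) : ℕ :=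
  sSup { t : ℕ | ∃ i k, IsPos p q i k ∧ t = σ i k }

/-!
Under the Sameh-Kuck schedule the pivot of column `k` is row `k` itself, and row `i` is
treated in columns `1, 2, …` at consecutive time steps `i - 1, i, …`. Two eliminations
at the same time step lie on the same anti-diagonal `i + k = const` and therefore involve
distinct rows, and every precedence constraint holds because `i + k` grows along it.
The last step is reached at the bottom row `p` in the last column, which is `q` when
`q < p` and `q - 1` when `p = q`.
-/

theorem isPos_iff {p q i k : ℕ} : IsPos p q i k ↔ 1 ≤ k ∧ k ≤ q ∧ k < i ∧ i ≤ p := by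
  unfold IsPos
  constructor <;> rintro ⟨h₁, h₂, h₃, h₄⟩ <;> refine ⟨h₁, ?_, h₃, h₄⟩ <;> omega

theorem coarseValidSchedule_samehKuck (p q : ℕ) :
    CoarseValidSchedule p q (fun _ k => k) (fun i k => i + k - 2) := by
  refine ⟨?_, ?_, ?_, ?_, fun i k _ h => absurd h (lt_irrefl k)⟩
  · rintro i k ⟨_, _, _, _⟩
    dsimp only
    omega
  · rintro i k i' k' ⟨_, _, _, _⟩ ⟨_, _, _, _⟩ hne heq
    simp only [ne_eq, Prod.mk.injEq] at hne heq ⊢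
    omega
  · rintro i k k' ⟨_, _, _, _⟩ _ _
    dsimp only
    omega
  · rintro i k k' ⟨_, _, _, _⟩ _ _ _
    dsimp only
    omega

theorem makespan_eq_of_isGreatest {p q m : ℕ} {σ : ℕ → ℕ → ℕ}
    (hmem : ∃ i k, IsPos p q i k ∧ σ i k = m) (hle : ∀ i k, IsPos p q i k → σ i k ≤ m) :
    makespan p q σ = m := by
  refine IsGreatest.csSup_eq ⟨?_, ?_⟩
  · obtain ⟨i, k, hik, rfl⟩ := hmem
    exact ⟨i, k, hik, rfl⟩
  · rintro t ⟨i, k, hik, rfl⟩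
    exact hle i k hik

/-- The last column holding a position to eliminate is `min q (p - 1)`; it is `0`
exactly when there is nothing to eliminate. -/
theorem makespan_samehKuck {p q : ℕ} (h : 1 ≤ min q (p - 1)) :
    makespan p q (fun i k => i + k - 2) = p + min q (p - 1) - 2 := by
  apply makespan_eq_of_isGreatest
  · exact ⟨p, min q (p - 1), isPos_iff.mpr (by omega), rfl⟩
  · intro i k hik
    rw [isPos_iff] at hik
    omega

theorem samehKuck_coarse_general (p q : ℕ) (hq : 1 ≤ q) :
    CoarseValidSchedule p q (fun _ k => k) (fun i k => i + k - 2) ∧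
    (q < p → makespan p q (fun i k => i + k - 2) = p + q - 2) ∧
    (p = q → 1 < q → makespan p q (fun i k => i + k - 2) = 2 * q - 3) := by
  refine ⟨coarseValidSchedule_samehKuck p q, fun hlt => ?_, fun heq hq₁ => ?_⟩
  · have hlast : min q (p - 1) = q := by omega
    rw [makespan_samehKuck (by omega), hlast]
  · have hlast : min q (p - 1) = q - 1 := by omega
    rw [makespan_samehKuck (by omega), hlast]
    omega

/-- In the coarse-grain model, the Sameh-Kuck schedule (pivot `k`, time step
`i + k - 2` for position `(i, k)`) is a valid coarse-grain schedule, and its makespan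
equals `p + q - 2` when `p > q ≥ 1` and `2q - 3` when `p = q > 1`. -/
theorem samehKuck_coarse (p q : ℕ) (hq : 1 ≤ q) (hpq : q ≤ p) :
    CoarseValidSchedule p q (fun _ k => k) (fun i k => i + k - 2) ∧
    (q < p → makespan p q (fun i k => i + k - 2) = p + q - 2) ∧
    (p = q → 1 < q → makespan p q (fun i k => i + k - 2) = 2 * q - 3) :=
  samehKuck_coarse_general p q hq

end CoarseQR
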